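/- arXiv:2212.11221 — 3 statements merged into one kernel-verified Lean document; each statement's English description precedes it below -/
import Mathlib

section
/- Let d, m ≥ 1, let v⁽¹⁾, …, v⁽ᵐ⁾ be i.i.d. uniformly random points on the unit sphere S^{d−1} ⊆ ℝ^d, and let x⁽¹⁾, …, x⁽ᵐ⁾ be i.i.d. samples from N(0, (1/d)·I_d). Then for every monomial p in the m·d coordinate variables (i.e., a product of nonnegative integer powers of the coordinates of the m vectors), E[p(v⁽¹⁾, …, v⁽ᵐ⁾)] ≤ E[p(x⁽¹⁾, …, x⁽ᵐ⁾)]. -/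
open MeasureTheory Metric ProbabilityTheory

/-- The uniform (rotation-invariant) probability distribution on the unit sphere of `ℝ^d`,
viewed as a measure on the ambient space. -/
noncomputable def uniformSphere (d : ℕ) : Measure (EuclideanSpace ℝ (Fin d)) :=
  ((volume : Measure (EuclideanSpace ℝ (Fin d))).toSphere Set.univ)⁻¹ •
    Measure.map Subtype.val ((volume : Measure (EuclideanSpace ℝ (Fin d))).toSphere)

/-- The Gaussian distribution `N(0, (1/d)·I_d)` on `ℝ^d`. -/
noncomputable def scaledGaussian (d : ℕ) : Measure (EuclideanSpace ℝ (Fin d)) :=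
  Measure.map (MeasurableEquiv.toLp 2 (Fin d → ℝ))
    (Measure.pi fun _ : Fin d => gaussianReal 0 (d : NNReal)⁻¹)

/-
Write `p` for the monomial and `n` for its degree. Since `p` is homogeneous, integrating `p`
against a radial weight `w(‖x‖)` in polar coordinates factors as
`(∫_{S^{d-1}} p) · ∫₀^∞ r^(n+d-1) w(r) dr`. For the Gaussian weight `exp (-d r² / 2)`, and with
the constant fixed by the case `p = 1`, this gives `E_G[p] = E_U[p] · J(n + d - 1) / J(d - 1)`,
where `J k = ∫₀^∞ r^k exp (-d r² / 2) dr`. The recursion `J (k + 2) = (k + 1) / d · J k` makes the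
ratio at least `1` when `n` is even. If every exponent is even then `p ≥ 0` and we are done;
otherwise the Gaussian moment vanishes by the symmetry `t ↦ -t`, hence so does the sphere moment.
Independence of the `m` vectors reduces the claim to a single vector.
-/

open Set Real

lemma MeasureTheory.Measure.integral_volumeIoiPow (k : ℕ) (g : ℝ → ℝ) :
    ∫ r, g r ∂Measure.volumeIoiPow k = ∫ r in Ioi 0, r ^ k * g r := by
  simp only [Measure.volumeIoiPow, ENNReal.ofReal]
  rw [integral_withDensity_eq_integral_smul ((measurable_subtype_coe.pow_const _).real_toNNReal),
    integral_subtype_comap measurableSet_Ioi fun r ↦ (r ^ k).toNNReal • g r]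
  refine setIntegral_congr_fun measurableSet_Ioi fun r hr ↦ ?_
  rw [NNReal.smul_def, Real.coe_toNNReal _ (pow_nonneg hr.out.le _), smul_eq_mul]

section Polar

variable {E : Type*} [NormedAddCommGroup E] [NormedSpace ℝ E] [FiniteDimensional ℝ E]
  [MeasurableSpace E] [BorelSpace E] [Nontrivial E] (μ : Measure E) [μ.IsAddHaarMeasure]

lemma integral_mul_fun_norm_of_homogeneous {f : E → ℝ} {n : ℕ}
    (hf : ∀ c : ℝ, 0 < c → ∀ x, f (c • x) = c ^ n * f x) (w : ℝ → ℝ) :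
    ∫ x, f x * w ‖x‖ ∂μ =
      (∫ u, f u ∂μ.toSphere) * ∫ r in Ioi 0, r ^ (n + Module.finrank ℝ E - 1) * w r := by
  have polar : ∀ x : ({0}ᶜ : Set E), f x * w ‖(x : E)‖ =
      f (homeomorphUnitSphereProd E x).1 *
        ((homeomorphUnitSphereProd E x).2 ^ n * w (homeomorphUnitSphereProd E x).2) := by
    intro x
    have hx : 0 < ‖(x : E)‖ := norm_pos_iff.2 x.2
    simp only [homeomorphUnitSphereProd_apply_fst_coe, homeomorphUnitSphereProd_apply_snd_coe]
    rw [← mul_assoc, mul_comm (f (_ • _)), ← hf _ hx, smul_inv_smul₀ hx.ne']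
  calc ∫ x, f x * w ‖x‖ ∂μ = ∫ x : ({0}ᶜ : Set E), f x * w ‖(x : E)‖ ∂μ.comap (↑) := by
        rw [integral_subtype_comap (measurableSet_singleton _).compl fun x ↦ f x * w ‖x‖,
          restrict_compl_singleton]
    _ = ∫ p, f p.1 * (p.2 ^ n * w p.2)
          ∂μ.toSphere.prod (.volumeIoiPow (Module.finrank ℝ E - 1)) := by
        simp_rw [polar]
        exact μ.measurePreserving_homeomorphUnitSphereProd.integral_comp
          (Homeomorph.measurableEmbedding _) fun p ↦ f p.1 * (p.2 ^ n * w p.2)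
    _ = _ := by
        rw [integral_prod_mul (fun u : sphere (0 : E) 1 ↦ f u)
            fun r : Ioi (0 : ℝ) ↦ (r : ℝ) ^ n * w r,
          Measure.integral_volumeIoiPow _ fun r ↦ r ^ n * w r]
        congr 1
        refine setIntegral_congr_fun measurableSet_Ioi fun r hr ↦ ?_
        rw [← mul_assoc, ← pow_add]
        congr 2
        have := Module.finrank_pos (R := ℝ) (M := E)
        omega

end Polar

noncomputable def gaussianRadialMoment (b : ℝ) (k : ℕ) : ℝ :=
  ∫ r in Ioi 0, r ^ k * exp (-b * r ^ 2)

namespace gaussianRadialMoment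

variable {b : ℝ}

lemma eq_Gamma (hb : 0 < b) (k : ℕ) :
    gaussianRadialMoment b k = b ^ (-((k : ℝ) + 1) / 2) * (1 / 2) * Gamma ((k + 1) / 2) := by
  have := integral_rpow_mul_exp_neg_mul_rpow (q := k) two_pos
    (by linarith [k.cast_nonneg (α := ℝ)]) hb
  rw [gaussianRadialMoment]
  simpa only [rpow_natCast, rpow_two] using this

lemma pos (hb : 0 < b) (k : ℕ) : 0 < gaussianRadialMoment b k := by
  rw [eq_Gamma hb]
  have := Gamma_pos_of_pos (by positivity : (0 : ℝ) < (k + 1) / 2)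
  positivity

lemma add_two (hb : 0 < b) (k : ℕ) :
    gaussianRadialMoment b (k + 2) = (k + 1) / (2 * b) * gaussianRadialMoment b k := by
  have hs : (0 : ℝ) < (k + 1) / 2 := by positivity
  rw [eq_Gamma hb, eq_Gamma hb,
    show ((k + 2 : ℕ) + 1 : ℝ) / 2 = (k + 1) / 2 + 1 by push_cast; ring, Gamma_add_one hs.ne',
    show -(((k + 2 : ℕ) : ℝ) + 1) / 2 = -((k : ℝ) + 1) / 2 + -1 by push_cast; ring,
    rpow_add hb, rpow_neg_one]
  field_simp

lemma le_add_two_mul (hb : 0 < b) {k : ℕ} (hk : 2 * b ≤ k + 1) (j : ℕ) :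
    gaussianRadialMoment b k ≤ gaussianRadialMoment b (k + 2 * j) := by
  induction j with
  | zero => rfl
  | succ j ih =>
    have hstep : 1 ≤ ((k + 2 * j : ℕ) + 1 : ℝ) / (2 * b) := by
      rw [one_le_div (by positivity)]; push_cast; linarith [j.cast_nonneg (α := ℝ)]
    calc gaussianRadialMoment b k ≤ gaussianRadialMoment b (k + 2 * j) := ih
      _ ≤ ((k + 2 * j : ℕ) + 1 : ℝ) / (2 * b) * gaussianRadialMoment b (k + 2 * j) :=
        le_mul_of_one_le_left (pos hb _).le hstep
      _ = gaussianRadialMoment b (k + 2 * (j + 1)) := by rw [← add_two hb]; rfl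

end gaussianRadialMoment

lemma integral_pow_gaussianReal_eq_zero_of_odd (v : NNReal) {j : ℕ} (hj : Odd j) :
    ∫ t, t ^ j ∂gaussianReal 0 v = 0 := by
  have hsymm : ∫ t, t ^ j ∂gaussianReal 0 v = ∫ t, (-t) ^ j ∂gaussianReal 0 v := by
    conv_lhs => rw [← neg_zero, ← gaussianReal_map_neg]
    exact integral_map measurable_neg.aemeasurable (by fun_prop)
  simp only [hj.neg_pow, integral_neg] at hsymm
  linarith

lemma integral_pi_gaussianReal_prod {ι : Type*} [Fintype ι] (μ : ℝ) {v : NNReal} (hv : v ≠ 0)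
    (g : ι → ℝ → ℝ) :
    ∫ x, ∏ i, g i (x i) ∂Measure.pi (fun _ ↦ gaussianReal μ v) =
      ∫ x : ι → ℝ, ∏ i, gaussianPDFReal μ v (x i) * g i (x i) := by
  simp_rw [integral_fintype_prod_eq_prod, integral_gaussianReal_eq_integral_smul hv, smul_eq_mul]
  rw [volume_pi, integral_fintype_prod_eq_prod (fun i t ↦ gaussianPDFReal μ v t * g i t)]

lemma prod_gaussianPDFReal_zero {ι : Type*} [Fintype ι] (v : NNReal) (x : ι → ℝ) :
    ∏ i, gaussianPDFReal 0 v (x i) =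
      (√(2 * π * v))⁻¹ ^ Fintype.card ι * exp (-(∑ i, x i ^ 2) / (2 * v)) := by
  simp only [gaussianPDFReal, sub_zero, Finset.prod_mul_distrib, Finset.prod_const,
    ← exp_sum, ← Finset.sum_div, Finset.sum_neg_distrib, Finset.card_univ]

def coordMonomial {ι : Type*} [Fintype ι] (e : ι → ℕ) (x : EuclideanSpace ℝ ι) : ℝ :=
  ∏ k, x k ^ e k

section coordMonomial

variable {ι : Type*} [Fintype ι] (e : ι → ℕ)

lemma coordMonomial_smul (c : ℝ) (x : EuclideanSpace ℝ ι) :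
    coordMonomial e (c • x) = c ^ (∑ k, e k) * coordMonomial e x := by
  simp only [coordMonomial, PiLp.smul_apply, smul_eq_mul, mul_pow, Finset.prod_mul_distrib,
    Finset.prod_pow_eq_pow_sum]

@[simp]
lemma coordMonomial_zero (x : EuclideanSpace ℝ ι) : coordMonomial 0 x = 1 := by
  simp [coordMonomial]

@[fun_prop]
lemma continuous_coordMonomial : Continuous (coordMonomial e) := by
  unfold coordMonomial; fun_prop

end coordMonomial

instance (d : ℕ) : IsProbabilityMeasure (scaledGaussian d) :=
  Measure.isProbabilityMeasure_map (MeasurableEquiv.toLp 2 (Fin d → ℝ)).measurable.aemeasurable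

lemma integral_coordMonomial_scaledGaussian_eq_prod (d : ℕ) (e : Fin d → ℕ) :
    ∫ x, coordMonomial e x ∂scaledGaussian d =
      ∏ k, ∫ t, t ^ e k ∂gaussianReal 0 (d : NNReal)⁻¹ := by
  rw [scaledGaussian, integral_map (MeasurableEquiv.toLp 2 (Fin d → ℝ)).measurable.aemeasurable
    (continuous_coordMonomial e).aestronglyMeasurable]
  exact integral_fintype_prod_eq_prod fun k t ↦ t ^ e k

lemma integral_coordMonomial_scaledGaussian_eq_zero_of_odd {d : ℕ} {e : Fin d → ℕ} {k : Fin d}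
    (hk : Odd (e k)) : ∫ x, coordMonomial e x ∂scaledGaussian d = 0 := by
  rw [integral_coordMonomial_scaledGaussian_eq_prod]
  exact Finset.prod_eq_zero (Finset.mem_univ k) (integral_pow_gaussianReal_eq_zero_of_odd _ hk)

lemma integral_coordMonomial_scaledGaussian_eq_radial {d : ℕ} (hd : 0 < d) (e : Fin d → ℕ) :
    ∫ x, coordMonomial e x ∂scaledGaussian d =
      (√(2 * π / d))⁻¹ ^ d *
        (∫ u, coordMonomial e u ∂(volume : Measure (EuclideanSpace ℝ (Fin d))).toSphere) *
        gaussianRadialMoment (d / 2) (∑ k, e k + d - 1) := by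
  have : Nonempty (Fin d) := ⟨⟨0, hd⟩⟩
  have hv : (d : NNReal)⁻¹ ≠ 0 := by positivity
  have density : ∀ x : EuclideanSpace ℝ (Fin d),
      ∏ k, gaussianPDFReal 0 (d : NNReal)⁻¹ (x k) =
        (√(2 * π / d))⁻¹ ^ d * exp (-(d / 2) * ‖x‖ ^ 2) := by
    intro x
    rw [prod_gaussianPDFReal_zero, EuclideanSpace.real_norm_sq_eq, Fintype.card_fin]
    congr 3
    push_cast
    field_simp
  calc ∫ x, coordMonomial e x ∂scaledGaussian d
      = ∫ x : Fin d → ℝ, ∏ k, gaussianPDFReal 0 (d : NNReal)⁻¹ (x k) * x k ^ e k := by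
        rw [integral_coordMonomial_scaledGaussian_eq_prod,
          ← integral_fintype_prod_eq_prod fun k t ↦ t ^ e k]
        exact integral_pi_gaussianReal_prod 0 hv fun k t ↦ t ^ e k
    _ = ∫ x : EuclideanSpace ℝ (Fin d), coordMonomial e x *
          ((√(2 * π / d))⁻¹ ^ d * exp (-(d / 2) * ‖x‖ ^ 2)) := by
        rw [← (EuclideanSpace.volume_preserving_symm_measurableEquiv_toLp (Fin d)).integral_comp']
        refine integral_congr_ae (ae_of_all _ fun x ↦ ?_)
        change ∏ k, gaussianPDFReal 0 _ (x k) * x k ^ e k = _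
        rw [Finset.prod_mul_distrib, density, mul_comm]
        rfl
    _ = _ := by
        rw [integral_mul_fun_norm_of_homogeneous _ (fun c _ x ↦ coordMonomial_smul e c x)
          fun r ↦ (√(2 * π / d))⁻¹ ^ d * exp (-(d / 2) * r ^ 2), finrank_euclideanSpace_fin]
        simp_rw [mul_left_comm _ ((√(2 * π / d))⁻¹ ^ d)]
        rw [integral_const_mul, gaussianRadialMoment]
        ring

lemma isProbabilityMeasure_uniformSphere {d : ℕ} (hd : 0 < d) :
    IsProbabilityMeasure (uniformSphere d) := by
  have : Nonempty (Fin d) := ⟨⟨0, hd⟩⟩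
  have hne : (volume : Measure (EuclideanSpace ℝ (Fin d))).toSphere univ ≠ 0 :=
    Measure.measure_univ_ne_zero.2 (Measure.toSphere_ne_zero _)
  constructor
  rw [uniformSphere, Measure.smul_apply, Measure.map_apply measurable_subtype_coe .univ,
    preimage_univ, smul_eq_mul, ENNReal.inv_mul_cancel hne (measure_ne_top _ _)]

lemma integral_uniformSphere (d : ℕ) (f : EuclideanSpace ℝ (Fin d) → ℝ) :
    ∫ x, f x ∂uniformSphere d =
      ((volume : Measure (EuclideanSpace ℝ (Fin d))).toSphere.real univ)⁻¹ *
        ∫ u, f u ∂(volume : Measure (EuclideanSpace ℝ (Fin d))).toSphere := by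
  rw [uniformSphere, integral_smul_measure,
    (MeasurableEmbedding.subtype_coe isClosed_sphere.measurableSet).integral_map,
    ENNReal.toReal_inv, smul_eq_mul, measureReal_def]

lemma integral_coordMonomial_scaledGaussian_eq_mul {d : ℕ} (hd : 0 < d) (e : Fin d → ℕ) :
    ∫ x, coordMonomial e x ∂scaledGaussian d =
      (∫ x, coordMonomial e x ∂uniformSphere d) *
        (gaussianRadialMoment (d / 2) (∑ k, e k + d - 1) /
          gaussianRadialMoment (d / 2) (d - 1)) := by
  -- the case `e = 0` is `scaledGaussian d univ = 1`, which pins down the normalising constant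
  have total_mass := integral_coordMonomial_scaledGaussian_eq_radial hd 0
  simp only [coordMonomial_zero, integral_const, probReal_univ, smul_eq_mul, mul_one,
    Pi.zero_apply, Finset.sum_const_zero, zero_add] at total_mass
  rw [integral_coordMonomial_scaledGaussian_eq_radial hd, integral_uniformSphere]
  set c := (√(2 * π / d))⁻¹ ^ d
  set T := (volume : Measure (EuclideanSpace ℝ (Fin d))).toSphere.real univ
  set S := ∫ u, coordMonomial e u ∂(volume : Measure (EuclideanSpace ℝ (Fin d))).toSphere
  set J₀ := gaussianRadialMoment (d / 2) (d - 1)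
  set J := gaussianRadialMoment (d / 2) (∑ k, e k + d - 1)
  have hT : T ≠ 0 := by
    rintro h
    simp [h] at total_mass
  have hJ₀ : J₀ ≠ 0 := (gaussianRadialMoment.pos (by positivity) _).ne'
  calc c * S * J = (c * T * J₀) * (T⁻¹ * S * (J / J₀)) := by field_simp
    _ = T⁻¹ * S * (J / J₀) := by rw [← total_mass, one_mul]

lemma integral_coordMonomial_uniformSphere_eq_zero_of_odd {d : ℕ} (hd : 0 < d) {e : Fin d → ℕ}
    {k : Fin d} (hk : Odd (e k)) : ∫ x, coordMonomial e x ∂uniformSphere d = 0 := by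
  have hb : (0 : ℝ) < d / 2 := by positivity
  have h := integral_coordMonomial_scaledGaussian_eq_mul hd e
  rwa [integral_coordMonomial_scaledGaussian_eq_zero_of_odd hk, eq_comm, mul_eq_zero_iff_right
    (div_pos (gaussianRadialMoment.pos hb _) (gaussianRadialMoment.pos hb _)).ne'] at h

lemma integral_coordMonomial_uniformSphere_nonneg {d : ℕ} (hd : 0 < d) (e : Fin d → ℕ) :
    0 ≤ ∫ x, coordMonomial e x ∂uniformSphere d := by
  by_cases hodd : ∃ k, Odd (e k)
  · obtain ⟨k, hk⟩ := hodd
    exact (integral_coordMonomial_uniformSphere_eq_zero_of_odd hd hk).ge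
  · simp only [not_exists, Nat.not_odd_iff_even] at hodd
    exact integral_nonneg fun x ↦ Finset.prod_nonneg fun k _ ↦ (hodd k).pow_nonneg _

lemma integral_coordMonomial_uniformSphere_le_scaledGaussian {d : ℕ} (hd : 0 < d)
    (e : Fin d → ℕ) :
    ∫ x, coordMonomial e x ∂uniformSphere d ≤ ∫ x, coordMonomial e x ∂scaledGaussian d := by
  by_cases hodd : ∃ k, Odd (e k)
  · obtain ⟨k, hk⟩ := hodd
    rw [integral_coordMonomial_uniformSphere_eq_zero_of_odd hd hk,
      integral_coordMonomial_scaledGaussian_eq_zero_of_odd hk]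
  · simp only [not_exists, Nat.not_odd_iff_even] at hodd
    obtain ⟨j, hj⟩ := Finset.even_sum _ fun k _ ↦ hodd k
    have hb : (0 : ℝ) < d / 2 := by positivity
    have hratio : 1 ≤ gaussianRadialMoment (d / 2) (∑ k, e k + d - 1) /
        gaussianRadialMoment (d / 2) (d - 1) := by
      rw [one_le_div (gaussianRadialMoment.pos hb _), hj,
        show j + j + d - 1 = d - 1 + 2 * j by omega]
      exact gaussianRadialMoment.le_add_two_mul hb
        (by rw [Nat.cast_sub hd]; push_cast; linarith) j
    rw [integral_coordMonomial_scaledGaussian_eq_mul hd]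
    exact le_mul_of_one_le_right (integral_coordMonomial_uniformSphere_nonneg hd e) hratio

theorem sphere_monomial_le_gaussian_monomial_general (d m : ℕ) (hd : 1 ≤ d)
    (e : Fin m → Fin d → ℕ) :
    (∫ v : Fin m → EuclideanSpace ℝ (Fin d), ∏ i, ∏ k, (v i k) ^ (e i k)
        ∂(Measure.pi fun _ : Fin m => uniformSphere d)) ≤
    (∫ x : Fin m → EuclideanSpace ℝ (Fin d), ∏ i, ∏ k, (x i k) ^ (e i k)
        ∂(Measure.pi fun _ : Fin m => scaledGaussian d)) := by
  have := isProbabilityMeasure_uniformSphere hd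
  change ∫ v : Fin m → _, ∏ i, coordMonomial (e i) (v i) ∂_ ≤
    ∫ x : Fin m → _, ∏ i, coordMonomial (e i) (x i) ∂_
  rw [integral_fintype_prod_eq_prod, integral_fintype_prod_eq_prod]
  exact Finset.prod_le_prod (fun i _ ↦ integral_coordMonomial_uniformSphere_nonneg hd (e i))
    fun i _ ↦ integral_coordMonomial_uniformSphere_le_scaledGaussian hd (e i)

/-- For i.i.d. uniform sphere points `v⁽¹⁾,…,v⁽ᵐ⁾` and i.i.d. `x⁽¹⁾,…,x⁽ᵐ⁾ ∼ N(0,(1/d)I_d)`,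
every monomial `p` (given by exponents `e i k` on the `k`-th coordinate of the `i`-th vector)
satisfies `E[p(v⁽¹⁾,…,v⁽ᵐ⁾)] ≤ E[p(x⁽¹⁾,…,x⁽ᵐ⁾)]`. -/
theorem sphere_monomial_le_gaussian_monomial (d m : ℕ) (hd : 1 ≤ d) (hm : 1 ≤ m)
    (e : Fin m → Fin d → ℕ) :
    (∫ v : Fin m → EuclideanSpace ℝ (Fin d), ∏ i, ∏ k, (v i k) ^ (e i k)
        ∂(Measure.pi fun _ : Fin m => uniformSphere d)) ≤
    (∫ x : Fin m → EuclideanSpace ℝ (Fin d), ∏ i, ∏ k, (x i k) ^ (e i k)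
        ∂(Measure.pi fun _ : Fin m => scaledGaussian d)) :=
  sphere_monomial_le_gaussian_monomial_general d m hd e
end

section
/- Let d ≥ 6 and m ≥ 1, let A be a symmetric m×m real matrix with operator norm ‖A‖₂ ≤ 1/2, and set M = (1/d)·𝟙𝟙ᵀ + (1 − 1/d)·I_m + A, where 𝟙 ∈ ℝ^m is the all-ones vector. Then ‖M^{−1}𝟙 − (d/m)·𝟙‖₂ ≤ 9·d/√m, where ‖·‖₂ on vectors denotes the Euclidean norm. -/
noncomputable def opNorm {n : ℕ} (A : Matrix (Fin n) (Fin n) ℝ) : ℝ :=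
  ‖LinearMap.toContinuousLinearMap (Matrix.toEuclideanLin A)‖

/-!
The all-ones part of `M` is positive semidefinite and `‖A‖₂ ≤ 1/2`, so
`⟪w, M w⟫ ≥ (1 - 1/d - 1/2) ‖w‖² ≥ ‖w‖² / 3`; hence `M` is invertible and `‖w‖ ≤ 3 ‖M w‖`.
The vector `v = (d/m) 𝟙` almost solves `M v = 𝟙`: the rank-one part sends it exactly to `𝟙`,
leaving the residual `𝟙 - M v = -((1 - 1/d) v + A v)` of norm at most `(3/2) ‖v‖ = (3/2) d/√m`.
So `‖M⁻¹ 𝟙 - v‖ ≤ 3 (3/2) d/√m`.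
-/

open Matrix WithLp
open scoped RealInnerProductSpace

theorem mul_norm_le_of_coercive {E : Type*} [NormedAddCommGroup E] [InnerProductSpace ℝ E]
    {T : E → E} {c : ℝ} (hT : ∀ w, c * ‖w‖ ^ 2 ≤ ⟪w, T w⟫) (w : E) :
    c * ‖w‖ ≤ ‖T w‖ := by
  rcases (norm_nonneg w).eq_or_lt with hw | hw
  · rw [← hw, mul_zero]
    exact norm_nonneg _
  · refine le_of_mul_le_mul_left ?_ hw
    calc ‖w‖ * (c * ‖w‖) = c * ‖w‖ ^ 2 := by ring
      _ ≤ ⟪w, T w⟫ := hT w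
      _ ≤ ‖w‖ * ‖T w‖ := real_inner_le_norm w (T w)

theorem posSemidef_allOnes {ι : Type*} [Fintype ι] :
    (of fun _ _ : ι => (1 : ℝ)).PosSemidef := by
  simpa [vecMulVec] using posSemidef_vecMulVec_self_star (fun _ : ι => (1 : ℝ))

theorem EuclideanSpace.norm_toLp_const {ι : Type*} [Fintype ι] (a : ℝ) :
    ‖toLp 2 (fun _ : ι => a)‖ = |a| * √(Fintype.card ι) := by
  rw [EuclideanSpace.norm_eq]
  simp [Real.sqrt_sq_eq_abs, mul_comm]

section

variable {n : ℕ}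

theorem norm_toEuclideanLin_le_opNorm (A : Matrix (Fin n) (Fin n) ℝ)
    (w : EuclideanSpace ℝ (Fin n)) : ‖toEuclideanLin A w‖ ≤ opNorm A * ‖w‖ :=
  (LinearMap.toContinuousLinearMap (toEuclideanLin A)).le_opNorm w

theorem neg_opNorm_mul_le_inner_toEuclideanLin (A : Matrix (Fin n) (Fin n) ℝ)
    (w : EuclideanSpace ℝ (Fin n)) : -(opNorm A * ‖w‖ ^ 2) ≤ ⟪w, toEuclideanLin A w⟫ := by
  refine neg_le_of_abs_le ?_
  calc |⟪w, toEuclideanLin A w⟫| ≤ ‖w‖ * ‖toEuclideanLin A w‖ := abs_real_inner_le_norm _ _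
    _ ≤ ‖w‖ * (opNorm A * ‖w‖) := by gcongr; exact norm_toEuclideanLin_le_opNorm A w
    _ = opNorm A * ‖w‖ ^ 2 := by ring

theorem Matrix.PosSemidef.inner_toEuclideanLin_nonneg {P : Matrix (Fin n) (Fin n) ℝ}
    (hP : P.PosSemidef) (w : EuclideanSpace ℝ (Fin n)) : 0 ≤ ⟪w, toEuclideanLin P w⟫ := by
  simpa [EuclideanSpace.inner_eq_star_dotProduct, dotProduct_comm] using
    hP.dotProduct_mulVec_nonneg (ofLp w)

theorem sub_opNorm_mul_le_inner_toEuclideanLin {P : Matrix (Fin n) (Fin n) ℝ} (hP : P.PosSemidef)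
    (s : ℝ) (A : Matrix (Fin n) (Fin n) ℝ) (w : EuclideanSpace ℝ (Fin n)) :
    (s - opNorm A) * ‖w‖ ^ 2 ≤ ⟪w, toEuclideanLin (P + s • 1 + A) w⟫ := by
  simp only [map_add, map_smul, LinearMap.add_apply, LinearMap.smul_apply, inner_add_right,
    inner_smul_right, toLpLin_one, LinearMap.id_apply, real_inner_self_eq_norm_sq]
  linarith [hP.inner_toEuclideanLin_nonneg w, neg_opNorm_mul_le_inner_toEuclideanLin A w]

theorem isUnit_of_coercive {M : Matrix (Fin n) (Fin n) ℝ} {c : ℝ} (hc : 0 < c)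
    (hM : ∀ w, c * ‖w‖ ^ 2 ≤ ⟪w, toEuclideanLin M w⟫) : IsUnit M := by
  refine mulVec_injective_iff_isUnit.mp ?_
  have hinj : Function.Injective (toEuclideanLin M) := by
    refine (injective_iff_map_eq_zero _).2 fun w hw => norm_eq_zero.1 ?_
    have := mul_norm_le_of_coercive hM w
    rw [hw, norm_zero] at this
    nlinarith [norm_nonneg w]
  exact (ofLp_injective 2).comp (hinj.comp (toLp_injective 2))

theorem mul_norm_inv_mulVec_sub_le {M : Matrix (Fin n) (Fin n) ℝ} {c : ℝ} (hc : 0 < c)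
    (hM : ∀ w, c * ‖w‖ ^ 2 ≤ ⟪w, toEuclideanLin M w⟫) (b v : Fin n → ℝ) :
    c * ‖toLp 2 (M⁻¹ *ᵥ b - v)‖ ≤ ‖toLp 2 (b - M *ᵥ v)‖ := by
  have hdet : IsUnit M.det := (isUnit_iff_isUnit_det M).mp (isUnit_of_coercive hc hM)
  have hres : M *ᵥ (M⁻¹ *ᵥ b - v) = b - M *ᵥ v := by
    rw [mulVec_sub, mulVec_mulVec, mul_nonsing_inv M hdet, one_mulVec]
  have := mul_norm_le_of_coercive hM (toLp 2 (M⁻¹ *ᵥ b - v))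
  rwa [toLpLin_toLp, toLin'_apply, hres] at this

theorem ones_sub_mulVec_const (hn : n ≠ 0) {d : ℝ} (hd : d ≠ 0)
    (A : Matrix (Fin n) (Fin n) ℝ) :
    (fun _ => 1) - ((1 / d) • of (fun _ _ : Fin n => (1 : ℝ)) + (1 - 1 / d) • 1 + A) *ᵥ
        (fun _ => d / n) = -((1 - 1 / d) • (fun _ => d / n) + A *ᵥ fun _ => d / n) := by
  ext i
  simp [add_mulVec, smul_mulVec, mulVec, dotProduct]
  field_simp
  ring

theorem norm_smul_add_mulVec_le (s : ℝ) (A : Matrix (Fin n) (Fin n) ℝ) (v : Fin n → ℝ) :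
    ‖toLp 2 (s • v + A *ᵥ v)‖ ≤ (|s| + opNorm A) * ‖toLp 2 v‖ := by
  calc ‖toLp 2 (s • v + A *ᵥ v)‖ ≤ ‖s • toLp 2 v‖ + ‖toEuclideanLin A (toLp 2 v)‖ :=
        norm_add_le (s • toLp 2 v) (toEuclideanLin A (toLp 2 v))
    _ ≤ |s| * ‖toLp 2 v‖ + opNorm A * ‖toLp 2 v‖ := by
        rw [norm_smul, Real.norm_eq_abs]
        gcongr
        exact norm_toEuclideanLin_le_opNorm A _
    _ = (|s| + opNorm A) * ‖toLp 2 v‖ := by ring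

end

theorem M_inv_ones_close_general (d m : ℕ) (hd : 6 ≤ d) (hm : 1 ≤ m)
    (A : Matrix (Fin m) (Fin m) ℝ) (hAnorm : opNorm A ≤ 1 / 2)
    (M : Matrix (Fin m) (Fin m) ℝ)
    (hM : M = (1 / (d : ℝ)) • Matrix.of (fun _ _ : Fin m => (1 : ℝ))
        + (1 - 1 / (d : ℝ)) • (1 : Matrix (Fin m) (Fin m) ℝ) + A) :
    Real.sqrt (∑ i, (M⁻¹.mulVec (fun _ => 1) i - (d : ℝ) / (m : ℝ)) ^ 2) ≤
      9 * (d : ℝ) / Real.sqrt m := by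
  have hd' : (6 : ℝ) ≤ d := by exact_mod_cast hd
  have hm' : (0 : ℝ) < m := by exact_mod_cast hm
  have hinv_d : 1 / (d : ℝ) ≤ 1 / 6 := one_div_le_one_div_of_le (by norm_num) hd'
  have hcoer : ∀ w, 1 / 3 * ‖w‖ ^ 2 ≤ ⟪w, toEuclideanLin M w⟫ := fun w => by
    refine le_trans ?_ (hM ▸ sub_opNorm_mul_le_inner_toEuclideanLin
      (posSemidef_allOnes.smul (by positivity)) _ A w)
    gcongr
    linarith
  set v : Fin m → ℝ := fun _ => d / m
  have hv : ‖toLp 2 v‖ = d / √m := by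
    rw [EuclideanSpace.norm_toLp_const, Fintype.card_fin, abs_of_nonneg (by positivity)]
    field_simp
    exact Real.sq_sqrt hm'.le
  have hres : ‖toLp 2 ((fun _ => 1) - M *ᵥ v)‖ ≤ 3 / 2 * (d / √m) := by
    rw [hM, ones_sub_mulVec_const (by omega) (by positivity), toLp_neg, norm_neg, ← hv]
    refine (norm_smul_add_mulVec_le _ A v).trans ?_
    gcongr
    rw [abs_of_nonneg (by linarith)]
    linarith [one_div_nonneg.2 (by linarith : (0 : ℝ) ≤ d)]
  have hgoal : √(∑ i, ((M⁻¹ *ᵥ fun _ => 1) i - d / m) ^ 2) =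
      ‖toLp 2 (M⁻¹ *ᵥ (fun _ => (1 : ℝ)) - v)‖ := by
    simp [EuclideanSpace.norm_eq, v]
  rw [hgoal, mul_div_assoc]
  linarith [mul_norm_inv_mulVec_sub_le (by norm_num) hcoer (fun _ => 1) v,
    (by positivity : (0 : ℝ) ≤ d / √m)]

/-- For `d ≥ 6`, `m ≥ 1`, a symmetric `A` with `‖A‖₂ ≤ 1/2`, and
`M = (1/d)·𝟙𝟙ᵀ + (1 − 1/d)·I + A`, the vector `M⁻¹𝟙` satisfies
`‖M⁻¹𝟙 − (d/m)·𝟙‖₂ ≤ 9·d/√m`. -/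
theorem M_inv_ones_close (d m : ℕ) (hd : 6 ≤ d) (hm : 1 ≤ m)
    (A : Matrix (Fin m) (Fin m) ℝ) (hA : A.IsSymm) (hAnorm : opNorm A ≤ 1 / 2)
    (M : Matrix (Fin m) (Fin m) ℝ)
    (hM : M = (1 / (d : ℝ)) • Matrix.of (fun _ _ : Fin m => (1 : ℝ))
        + (1 - 1 / (d : ℝ)) • (1 : Matrix (Fin m) (Fin m) ℝ) + A) :
    Real.sqrt (∑ i, (M⁻¹.mulVec (fun _ => 1) i - (d : ℝ) / (m : ℝ)) ^ 2) ≤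
      9 * (d : ℝ) / Real.sqrt m :=
  M_inv_ones_close_general d m hd hm A hAnorm M hM
end

section
/- For every constant C₀ > 0 there exists d₀ such that for all d ≥ d₀ and all integers m with d ≤ m ≤ d² the following holds. Let M be an m×m real matrix of the form M = (1/d)·𝟙𝟙ᵀ + (1 − 1/d)·I_m + A with A symmetric and ‖A‖₂ ≤ 1/2 (so M is invertible with ‖M^{−1}‖₂ ≤ 3). Let ε₁, …, ε_m be i.i.d. real random variables with |ε₁| ≤ log(d)/√d almost surely and |E[ε₁]| ≤ C₀/d. Then with probability at least 1 − 1/d, every coordinate of δ = M^{−1}ε satisfies |δ_i| ≤ log²(d)/√d. -/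
/-!
Since `‖A‖ ≤ 1/2` and `d ≥ 6`, `⟪Mx, x⟫ ≥ ‖x‖²/3`, so `M` is invertible with `‖M⁻¹‖ ≤ 3`. As `M` is
symmetric, each row `w` of `M⁻¹` is a column, whence `∑ w_j² ≤ 9`; applying `M⁻¹` to
`M𝟙 = (1 + (m-1)/d)𝟙 + A𝟙` shows `|∑ w_j| ≤ 2√d`. Thus `δ_i = ∑ w_j ε_j` has mean
`E[ε₁] ∑ w_j = O(1/√d)`, and Hoeffding's inequality for the independent summands
`w_j (ε_j - E[ε₁])` bounds `P(|δ_i| > log² d/√d)` by `2 exp(-log² d/72)`. A union bound over the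
`m ≤ d²` coordinates costs at most `2d² exp(-log² d/72) ≤ 1/d` once `log d ≥ 300`.
-/

open MeasureTheory ProbabilityTheory

open Matrix Real WithLp
open scoped RealInnerProductSpace

lemma le_norm_of_mul_norm_sq_le_inner {E : Type*} [NormedAddCommGroup E] [InnerProductSpace ℝ E]
    {x y : E} {c : ℝ} (h : c * ‖x‖ ^ 2 ≤ ⟪y, x⟫) : c * ‖x‖ ≤ ‖y‖ := by
  rcases (norm_nonneg x).eq_or_lt with hx | hx
  · rw [← hx, mul_zero]
    exact norm_nonneg y
  · refine le_of_mul_le_mul_right ?_ hx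
    calc c * ‖x‖ * ‖x‖ = c * ‖x‖ ^ 2 := by ring
      _ ≤ ⟪y, x⟫ := h
      _ ≤ ‖y‖ * ‖x‖ := real_inner_le_norm y x

section Matrix

variable {n : ℕ}

lemma norm_toLp_mulVec_le {B : Matrix (Fin n) (Fin n) ℝ} {c : ℝ} (hB : opNorm B ≤ c)
    (v : Fin n → ℝ) : ‖toLp 2 (B *ᵥ v)‖ ≤ c * ‖toLp 2 v‖ :=
  (LinearMap.toContinuousLinearMap (toEuclideanLin B)).le_of_opNorm_le hB (toLp 2 v)

lemma norm_toLp_sq (v : Fin n → ℝ) : ‖toLp 2 v‖ ^ 2 = ∑ i, v i ^ 2 := by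
  simp [EuclideanSpace.real_norm_sq_eq]

lemma inner_toLp (v w : Fin n → ℝ) : ⟪toLp 2 v, toLp 2 w⟫ = ∑ i, v i * w i := by
  simp [EuclideanSpace.inner_toLp_toLp, dotProduct, mul_comm]

lemma abs_apply_le_norm_toLp (v : Fin n → ℝ) (i : Fin n) : |v i| ≤ ‖toLp 2 v‖ :=
  PiLp.norm_apply_le (toLp 2 v) i

def equicorrelation (n : ℕ) (ρ : ℝ) : Matrix (Fin n) (Fin n) ℝ :=
  ρ • Matrix.of (fun _ _ : Fin n => (1 : ℝ)) + (1 - ρ) • 1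

lemma equicorrelation_mulVec (ρ : ℝ) (x : Fin n → ℝ) (i : Fin n) :
    (equicorrelation n ρ *ᵥ x) i = ρ * ∑ j, x j + (1 - ρ) * x i := by
  rw [equicorrelation, add_mulVec, smul_mulVec, smul_mulVec, one_mulVec]
  simp [mulVec, dotProduct]

lemma inner_equicorrelation_add_mulVec_ge {ρ : ℝ} (hρ₀ : 0 ≤ ρ) (hρ : ρ ≤ 1 / 6)
    {A : Matrix (Fin n) (Fin n) ℝ} (hA : opNorm A ≤ 1 / 2) (x : Fin n → ℝ) :
    ‖toLp 2 x‖ ^ 2 / 3 ≤ ⟪toLp 2 ((equicorrelation n ρ + A) *ᵥ x), toLp 2 x⟫ := by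
  have h_expand : ⟪toLp 2 ((equicorrelation n ρ + A) *ᵥ x), toLp 2 x⟫
      = ρ * (∑ j, x j) ^ 2 + (1 - ρ) * ‖toLp 2 x‖ ^ 2 + ⟪toLp 2 (A *ᵥ x), toLp 2 x⟫ := by
    rw [norm_toLp_sq, inner_toLp, inner_toLp]
    simp only [add_mulVec, Pi.add_apply, equicorrelation_mulVec, add_mul, Finset.sum_add_distrib,
      mul_assoc, ← Finset.mul_sum, sq]
  have h_pert : -(‖toLp 2 x‖ ^ 2 / 2) ≤ ⟪toLp 2 (A *ᵥ x), toLp 2 x⟫ := by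
    have := (abs_real_inner_le_norm (toLp 2 (A *ᵥ x)) (toLp 2 x)).trans
      (mul_le_mul_of_nonneg_right (norm_toLp_mulVec_le hA x) (norm_nonneg _))
    linarith [(abs_le.1 this).1]
  rw [h_expand]
  nlinarith [mul_nonneg hρ₀ (sq_nonneg (∑ j, x j)), sq_nonneg ‖toLp 2 x‖]

lemma norm_toLp_le_three_mul_norm_mulVec {ρ : ℝ} (hρ₀ : 0 ≤ ρ) (hρ : ρ ≤ 1 / 6)
    {A : Matrix (Fin n) (Fin n) ℝ} (hA : opNorm A ≤ 1 / 2) (x : Fin n → ℝ) :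
    ‖toLp 2 x‖ ≤ 3 * ‖toLp 2 ((equicorrelation n ρ + A) *ᵥ x)‖ := by
  have := le_norm_of_mul_norm_sq_le_inner (c := 1 / 3)
    ((inner_equicorrelation_add_mulVec_ge hρ₀ hρ hA x).trans_eq' (by ring))
  linarith

lemma isUnit_equicorrelation_add {ρ : ℝ} (hρ₀ : 0 ≤ ρ) (hρ : ρ ≤ 1 / 6)
    {A : Matrix (Fin n) (Fin n) ℝ} (hA : opNorm A ≤ 1 / 2) :
    IsUnit (equicorrelation n ρ + A).det := by
  rw [← isUnit_iff_isUnit_det, ← mulVec_injective_iff_isUnit]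
  intro x y hxy
  have := norm_toLp_le_three_mul_norm_mulVec hρ₀ hρ hA (x - y)
  rw [mulVec_sub, hxy, sub_self] at this
  simpa [sub_eq_zero] using this

lemma norm_toLp_inv_mulVec_le {ρ : ℝ} (hρ₀ : 0 ≤ ρ) (hρ : ρ ≤ 1 / 6)
    {A : Matrix (Fin n) (Fin n) ℝ} (hA : opNorm A ≤ 1 / 2) (y : Fin n → ℝ) :
    ‖toLp 2 ((equicorrelation n ρ + A)⁻¹ *ᵥ y)‖ ≤ 3 * ‖toLp 2 y‖ := by
  simpa [mulVec_mulVec, mul_nonsing_inv _ ((isUnit_equicorrelation_add hρ₀ hρ hA))] using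
    norm_toLp_le_three_mul_norm_mulVec hρ₀ hρ hA ((equicorrelation n ρ + A)⁻¹ *ᵥ y)

lemma isSymm_equicorrelation (ρ : ℝ) : (equicorrelation n ρ).IsSymm :=
  (IsSymm.ext fun _ _ => rfl : (of fun _ _ : Fin n => (1 : ℝ)).IsSymm).smul ρ |>.add
    (isSymm_one.smul _)

lemma sum_sq_inv_apply_le {ρ : ℝ} (hρ₀ : 0 ≤ ρ) (hρ : ρ ≤ 1 / 6)
    {A : Matrix (Fin n) (Fin n) ℝ} (hAs : A.IsSymm) (hA : opNorm A ≤ 1 / 2) (i : Fin n) :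
    ∑ j, (equicorrelation n ρ + A)⁻¹ i j ^ 2 ≤ 9 := by
  set M := equicorrelation n ρ + A
  have hrow : (fun j => M⁻¹ i j) = M⁻¹ *ᵥ Pi.single i 1 := by
    ext j
    rw [mulVec_single_one, col_apply, ((isSymm_equicorrelation ρ).add hAs).inv.apply]
  have := norm_toLp_inv_mulVec_le hρ₀ hρ hA (Pi.single i 1)
  rw [PiLp.toLp_single, PiLp.norm_single, norm_one, mul_one, ← hrow] at this
  rw [← norm_toLp_sq]
  nlinarith [norm_nonneg (toLp 2 fun j => M⁻¹ i j)]

lemma abs_sum_inv_apply_le {ρ : ℝ} (hρ₀ : 0 ≤ ρ) (hρ : ρ ≤ 1 / 6)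
    {A : Matrix (Fin n) (Fin n) ℝ} (hA : opNorm A ≤ 1 / 2) (i : Fin n) :
    |∑ j, (equicorrelation n ρ + A)⁻¹ i j| ≤ (1 + 3 / 2 * √n) / (1 + (n - 1) * ρ) := by
  set M := equicorrelation n ρ + A
  set ones : Fin n → ℝ := fun _ => 1
  set z := M⁻¹ *ᵥ (A *ᵥ ones)
  have hn : (1 : ℝ) ≤ n := by exact_mod_cast i.pos
  have hden : 0 < 1 + (n - 1) * ρ := by nlinarith
  have h_ones : M *ᵥ ones = (1 + (n - 1) * ρ) • ones + A *ᵥ ones := by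
    ext k
    simp [M, ones, add_mulVec, equicorrelation_mulVec]
    ring
  have h_solve : 1 = (1 + (n - 1) * ρ) * ∑ j, M⁻¹ i j + z i := by
    have hMinv : M⁻¹ * M = 1 := nonsing_inv_mul _ (isUnit_equicorrelation_add hρ₀ hρ hA)
    have h_row : (M⁻¹ *ᵥ ones) i = ∑ j, M⁻¹ i j := by simp [ones, mulVec, dotProduct]
    have := congrFun (congrArg (M⁻¹ *ᵥ ·) h_ones) i
    rwa [mulVec_mulVec, hMinv, one_mulVec, mulVec_add, mulVec_smul, Pi.add_apply, Pi.smul_apply,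
      smul_eq_mul, h_row] at this
  have h_norm_ones : ‖toLp 2 ones‖ = √n := by
    rw [← sqrt_sq (norm_nonneg _), norm_toLp_sq]
    simp [ones]
  have hz : |z i| ≤ 3 / 2 * √n := calc
    |z i| ≤ ‖toLp 2 z‖ := abs_apply_le_norm_toLp z i
    _ ≤ 3 * ‖toLp 2 (A *ᵥ ones)‖ := norm_toLp_inv_mulVec_le hρ₀ hρ hA _
    _ ≤ 3 * (1 / 2 * ‖toLp 2 ones‖) := by gcongr; exact norm_toLp_mulVec_le hA ones
    _ = 3 / 2 * √n := by rw [h_norm_ones]; ring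
  rw [le_div_iff₀ hden]
  calc |∑ j, M⁻¹ i j| * (1 + (n - 1) * ρ) = |(1 + (n - 1) * ρ) * ∑ j, M⁻¹ i j| := by
        rw [abs_mul, abs_of_pos hden, mul_comm]
    _ = |1 - z i| := by rw [eq_sub_of_add_eq h_solve.symm]
    _ ≤ 1 + 3 / 2 * √n := by linarith [abs_sub (1 : ℝ) (z i), abs_one (α := ℝ)]

lemma one_add_div_le_two_sqrt {d m : ℝ} (hd : 4 ≤ d) (hdm : d ≤ m) :
    (1 + 3 / 2 * √m) / (1 + (m - 1) * (1 / d)) ≤ 2 * √d := by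
  obtain ⟨u, hu, rfl⟩ : ∃ u, 0 ≤ u ∧ d = u ^ 2 :=
    ⟨√d, sqrt_nonneg d, (sq_sqrt (by linarith)).symm⟩
  obtain ⟨t, ht, rfl⟩ : ∃ t, 0 ≤ t ∧ m = t ^ 2 :=
    ⟨√m, sqrt_nonneg m, (sq_sqrt (by linarith)).symm⟩
  have hu2 : 2 ≤ u := by nlinarith
  have htu : u ≤ t := by nlinarith
  have hden : 0 < 1 + (t ^ 2 - 1) * (1 / u ^ 2) := by
    have : 0 ≤ (t ^ 2 - 1) * (1 / u ^ 2) := mul_nonneg (by nlinarith) (by positivity)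
    linarith
  rw [sqrt_sq hu, sqrt_sq ht, div_le_iff₀ hden]
  field_simp
  nlinarith [mul_le_mul htu htu hu ht]

end Matrix

lemma ProbabilityTheory.HasSubgaussianMGF.mono {Ω : Type*} {mΩ : MeasurableSpace Ω}
    {μ : Measure Ω} {X : Ω → ℝ} {c c' : NNReal} (h : HasSubgaussianMGF X c μ) (hc : c ≤ c') :
    HasSubgaussianMGF X c' μ where
  integrable_exp_mul := h.integrable_exp_mul
  mgf_le t := (h.mgf_le t).trans (exp_le_exp.2 (by gcongr))

lemma measure_pi_sum_mul_sub_integral_ge_le {ι : Type*} [Fintype ι] {ν : Measure ℝ}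
    [IsProbabilityMeasure ν] {b : ℝ} (hb : ∀ᵐ s ∂ν, |s| ≤ b) {w : ι → ℝ} {S : ℝ}
    (hS : ∑ j, w j ^ 2 ≤ S) {ε : ℝ} (hε : 0 ≤ ε) :
    (Measure.pi fun _ : ι => ν) {x | ε ≤ ∑ j, w j * (x j - ∫ s, s ∂ν)}
      ≤ ENNReal.ofReal (exp (-ε ^ 2 / (2 * (b ^ 2 * S)))) := by
  set P := Measure.pi fun _ : ι => ν
  have h_centered : HasSubgaussianMGF (fun s => s - ∫ s, s ∂ν) ((‖b - -b‖₊ / 2) ^ 2) ν :=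
    hasSubgaussianMGF_of_mem_Icc aemeasurable_id <| by
      filter_upwards [hb] with s hs using abs_le.1 hs
  have h_coord (j : ι) : HasSubgaussianMGF (fun x : ι → ℝ => w j * (x j - ∫ s, s ∂ν))
      (⟨w j ^ 2, sq_nonneg _⟩ * (‖b - -b‖₊ / 2) ^ 2) P := by
    have h_map : P.map (Function.eval j) = ν := (measurePreserving_eval (fun _ : ι => ν) j).map_eq
    exact (HasSubgaussianMGF.of_map (measurable_pi_apply j).aemeasurable
      (by rwa [h_map])).const_mul (w j)
  have h_indep : iIndepFun (fun j (x : ι → ℝ) => w j * (x j - ∫ s, s ∂ν)) P :=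
    iIndepFun_pi (μ := fun _ : ι => ν) (X := fun j s => w j * (s - ∫ s, s ∂ν))
      fun j => by fun_prop
  have hbS : 0 ≤ b ^ 2 * S :=
    mul_nonneg (sq_nonneg b) ((Finset.sum_nonneg fun j _ => sq_nonneg (w j)).trans hS)
  have h_sum := (HasSubgaussianMGF.sum_of_iIndepFun h_indep (s := Finset.univ)
    fun j _ => h_coord j).mono (c' := (b ^ 2 * S).toNNReal) <| by
      have hb2 : (((‖b - -b‖₊ / 2) ^ 2 : NNReal) : ℝ) = b ^ 2 := by
        push_cast
        rw [norm_eq_abs, div_pow, sq_abs]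
        ring
      rw [← NNReal.coe_le_coe, coe_toNNReal _ hbS, NNReal.coe_sum]
      calc _ = ∑ j, w j ^ 2 * b ^ 2 := Finset.sum_congr rfl fun j _ => by rw [← hb2]; rfl
        _ ≤ b ^ 2 * S := by rw [← Finset.sum_mul, mul_comm]; gcongr
  rw [← ofReal_measureReal]
  refine ENNReal.ofReal_le_ofReal ((h_sum.measure_ge_le hε).trans_eq ?_)
  rw [coe_toNNReal _ hbS]

lemma sum_mul_eq_sum_mul_sub_add {ι : Type*} [Fintype ι] (w x : ι → ℝ) (μ : ℝ) :
    ∑ j, w j * x j = ∑ j, w j * (x j - μ) + μ * ∑ j, w j := by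
  rw [Finset.mul_sum]
  simp only [mul_sub, Finset.sum_sub_distrib, mul_comm μ, sub_add_cancel]

lemma measure_pi_abs_sum_mul_gt_le {ι : Type*} [Fintype ι] {ν : Measure ℝ}
    [IsProbabilityMeasure ν] {b : ℝ} (hb : ∀ᵐ s ∂ν, |s| ≤ b) {w : ι → ℝ} {S : ℝ}
    (hS : ∑ j, w j ^ 2 ≤ S) {L η : ℝ} (hη : |∫ s, s ∂ν| * |∑ j, w j| ≤ η) (hηL : η ≤ L) :
    (Measure.pi fun _ : ι => ν) {x | L < |∑ j, w j * x j|}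
      ≤ 2 * ENNReal.ofReal (exp (-(L - η) ^ 2 / (2 * (b ^ 2 * S)))) := by
  set μ := ∫ s, s ∂ν
  have h_drift : |μ * ∑ j, w j| ≤ η := (abs_mul μ _).trans_le hη
  have h_split : {x : ι → ℝ | L < |∑ j, w j * x j|} ⊆
      {x | L - η ≤ ∑ j, w j * (x j - μ)} ∪ {x | L - η ≤ ∑ j, -w j * (x j - μ)} := by
    intro x hx
    have h_neg : ∑ j, -w j * (x j - μ) = -∑ j, w j * (x j - μ) := by
      simp only [neg_mul, Finset.sum_neg_distrib]
    rw [Set.mem_ofPred_eq, sum_mul_eq_sum_mul_sub_add w x μ] at hx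
    rw [Set.mem_union, Set.mem_ofPred_eq, Set.mem_ofPred_eq, h_neg]
    rcases lt_abs.1 hx with h | h
    · left; linarith [(abs_le.1 h_drift).2]
    · right; linarith [(abs_le.1 h_drift).1]
  have hS_neg : ∑ j, (-w j) ^ 2 ≤ S := by simpa only [neg_sq] using hS
  calc _ ≤ _ := measure_mono h_split
    _ ≤ _ := measure_union_le _ _
    _ ≤ _ := add_le_add (measure_pi_sum_mul_sub_integral_ge_le hb hS (by linarith))
        (measure_pi_sum_mul_sub_integral_ge_le hb hS_neg (by linarith))
    _ = _ := (two_mul _).symm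

lemma ofReal_one_sub_le_of_measure_compl_le {α : Type*} [MeasurableSpace α]
    {μ : Measure α} [IsProbabilityMeasure μ] {s : Set α} {p : ℝ} (hp : 0 ≤ p)
    (h : μ sᶜ ≤ ENNReal.ofReal p) : ENNReal.ofReal (1 - p) ≤ μ s := by
  rw [ENNReal.ofReal_sub _ hp, ENNReal.ofReal_one, tsub_le_iff_right]
  calc 1 = μ (s ∪ sᶜ) := by rw [Set.union_compl_self, measure_univ]
    _ ≤ μ s + μ sᶜ := measure_union_le _ _
    _ ≤ μ s + ENNReal.ofReal p := by gcongr

lemma two_mul_sq_mul_exp_neg_log_sq_le {d : ℝ} (hd : exp 300 ≤ d) :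
    2 * d ^ 2 * exp (-(log d ^ 2 / 72)) ≤ 1 / d := by
  obtain ⟨l, rfl⟩ : ∃ l, d = exp l := ⟨log d, (exp_log ((exp_pos 300).trans_le hd)).symm⟩
  have hl : 300 ≤ l := exp_le_exp.1 hd
  have hlog2 : log 2 ≤ 1 := by linarith [log_le_sub_one_of_pos (by norm_num : (0 : ℝ) < 2)]
  rw [log_exp, one_div, ← exp_neg, ← exp_log (by norm_num : (0 : ℝ) < 2), ← exp_nat_mul,
    ← exp_add, ← exp_add, exp_le_exp]
  push_cast
  nlinarith

lemma measure_pi_abs_inv_mulVec_apply_gt_le {m : ℕ} {d C₀ : ℝ} (hd : 6 ≤ d) (hdm : d ≤ m)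
    {A : Matrix (Fin m) (Fin m) ℝ} (hAs : A.IsSymm) (hA : opNorm A ≤ 1 / 2)
    {ν : Measure ℝ} [IsProbabilityMeasure ν] (hb : ∀ᵐ s ∂ν, |s| ≤ log d / √d)
    (hmean : |∫ s, s ∂ν| ≤ C₀ / d) (hl : 0 < log d) (hC₀ : 4 * C₀ ≤ log d ^ 2) (i : Fin m) :
    (Measure.pi fun _ : Fin m => ν)
        {x | log d ^ 2 / √d < |((equicorrelation m (1 / d) + A)⁻¹ *ᵥ x) i|}
      ≤ 2 * ENNReal.ofReal (exp (-(log d ^ 2 / 72))) := by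
  set M := equicorrelation m (1 / d) + A
  have hρ₀ : 0 ≤ 1 / d := by positivity
  have hρ : 1 / d ≤ 1 / 6 := one_div_le_one_div_of_le (by norm_num) hd
  have h_sq := sum_sq_inv_apply_le hρ₀ hρ hAs hA i
  have h_sum := (abs_sum_inv_apply_le hρ₀ hρ hA i).trans
    (one_add_div_le_two_sqrt (by linarith) hdm)
  have hs : 0 < √d := sqrt_pos.2 (by linarith)
  have hss : √d * √d = d := mul_self_sqrt (by linarith)
  set L := log d ^ 2 / √d
  set η := C₀ / d * (2 * √d)
  have hη : |∫ s, s ∂ν| * |∑ j, M⁻¹ i j| ≤ η :=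
    mul_le_mul hmean h_sum (abs_nonneg _) ((abs_nonneg _).trans hmean)
  have hηL : η ≤ L / 2 := by
    simp only [η, L]
    rw [div_mul_eq_mul_div, div_div, div_le_div_iff₀ (by positivity) (by positivity)]
    nlinarith
  have h_exponent : -(L - η) ^ 2 / (2 * ((log d / √d) ^ 2 * 9)) ≤ -(log d ^ 2 / 72) := by
    rw [neg_div, neg_le_neg_iff, le_div_iff₀ (by positivity)]
    calc log d ^ 2 / 72 * (2 * ((log d / √d) ^ 2 * 9)) = (L / 2) ^ 2 := by
          simp only [L]
          field_simp
          norm_num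
      _ ≤ (L - η) ^ 2 := pow_le_pow_left₀ (by positivity) (by linarith) 2
  calc _ ≤ _ :=
        measure_pi_abs_sum_mul_gt_le hb h_sq hη (hηL.trans (half_le_self (by positivity)))
    _ ≤ _ := by gcongr

theorem delta_coordinates_small_general (C₀ : ℝ) :
    ∃ d₀ : ℕ, ∀ d : ℕ, d₀ ≤ d → ∀ m : ℕ, d ≤ m → m ≤ d ^ 2 →
      ∀ A : Matrix (Fin m) (Fin m) ℝ, A.IsSymm → opNorm A ≤ 1 / 2 →
      ∀ M : Matrix (Fin m) (Fin m) ℝ,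
        M = (1 / (d : ℝ)) • Matrix.of (fun _ _ : Fin m => (1 : ℝ))
          + (1 - 1 / (d : ℝ)) • (1 : Matrix (Fin m) (Fin m) ℝ) + A →
      ∀ ν : Measure ℝ, IsProbabilityMeasure ν →
        (∀ᵐ s ∂ν, |s| ≤ Real.log d / Real.sqrt d) →
        |∫ s, s ∂ν| ≤ C₀ / d →
        ENNReal.ofReal (1 - 1 / (d : ℝ)) ≤
          (Measure.pi fun _ : Fin m => ν)
            {ε : Fin m → ℝ | ∀ i, |M⁻¹.mulVec ε i| ≤ (Real.log d) ^ 2 / Real.sqrt d} := by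
  refine ⟨⌈exp (300 + |C₀|)⌉₊, fun d hd m hdm hmd A hAs hA M hM ν hν hb hmean => ?_⟩
  obtain rfl : M = equicorrelation m (1 / d) + A := hM
  have hd_exp : exp (300 + |C₀|) ≤ d := Nat.ceil_le.1 hd
  have hd300 : exp 300 ≤ d := (exp_le_exp.2 (by linarith [abs_nonneg C₀])).trans hd_exp
  have hd_pos : (0 : ℝ) < d := (exp_pos _).trans_le hd_exp
  have hl : 300 + |C₀| ≤ log d := (le_log_iff_exp_le hd_pos).2 hd_exp
  have hd6 : (6 : ℝ) ≤ d := by linarith [add_one_le_exp (300 + |C₀|), abs_nonneg C₀]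
  have hC₀ : 4 * C₀ ≤ log d ^ 2 := by nlinarith [le_abs_self C₀, abs_nonneg C₀]
  have hm : (m : ℝ) ≤ (d : ℝ) ^ 2 := by exact_mod_cast hmd
  refine ofReal_one_sub_le_of_measure_compl_le (by positivity) ?_
  calc _ = (Measure.pi fun _ : Fin m => ν)
        (⋃ i, {x | log d ^ 2 / √d < |((equicorrelation m (1 / d) + A)⁻¹ *ᵥ x) i|}) := by
        congr 1
        ext x
        simp
    _ ≤ ∑ i, _ := measure_iUnion_fintype_le _ _
    _ ≤ ∑ _i : Fin m, 2 * ENNReal.ofReal (exp (-(log d ^ 2 / 72))) :=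
        Finset.sum_le_sum fun i _ => measure_pi_abs_inv_mulVec_apply_gt_le hd6
          (by exact_mod_cast hdm) hAs hA hb hmean (by linarith [abs_nonneg C₀]) hC₀ i
    _ = ENNReal.ofReal (m * (2 * exp (-(log d ^ 2 / 72)))) := by
        rw [Finset.sum_const, Finset.card_univ, Fintype.card_fin, nsmul_eq_mul,
          ENNReal.ofReal_mul (by positivity), ENNReal.ofReal_mul (by positivity),
          ENNReal.ofReal_natCast, ENNReal.ofReal_ofNat]
    _ ≤ ENNReal.ofReal (1 / d) := ENNReal.ofReal_le_ofReal <| by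
        nlinarith [two_mul_sq_mul_exp_neg_log_sq_le hd300, exp_pos (-(log d ^ 2 / 72))]

/-- For every `C₀ > 0` there is `d₀` such that for all `d ≥ d₀` and `d ≤ m ≤ d²`:
if `M = (1/d)·𝟙𝟙ᵀ + (1 − 1/d)·I + A` with `A` symmetric and `‖A‖₂ ≤ 1/2`, and
`ε₁,…,ε_m` are i.i.d. with `|ε₁| ≤ log(d)/√d` a.s. and `|E[ε₁]| ≤ C₀/d`, then with
probability at least `1 − 1/d` all coordinates of `δ = M⁻¹ε` satisfy `|δ_i| ≤ log²(d)/√d`. -/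
theorem delta_coordinates_small (C₀ : ℝ) (hC₀ : 0 < C₀) :
    ∃ d₀ : ℕ, ∀ d : ℕ, d₀ ≤ d → ∀ m : ℕ, d ≤ m → m ≤ d ^ 2 →
      ∀ A : Matrix (Fin m) (Fin m) ℝ, A.IsSymm → opNorm A ≤ 1 / 2 →
      ∀ M : Matrix (Fin m) (Fin m) ℝ,
        M = (1 / (d : ℝ)) • Matrix.of (fun _ _ : Fin m => (1 : ℝ))
          + (1 - 1 / (d : ℝ)) • (1 : Matrix (Fin m) (Fin m) ℝ) + A →
      ∀ ν : Measure ℝ, IsProbabilityMeasure ν →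
        (∀ᵐ s ∂ν, |s| ≤ Real.log d / Real.sqrt d) →
        |∫ s, s ∂ν| ≤ C₀ / d →
        ENNReal.ofReal (1 - 1 / (d : ℝ)) ≤
          (Measure.pi fun _ : Fin m => ν)
            {ε : Fin m → ℝ | ∀ i, |M⁻¹.mulVec ε i| ≤ (Real.log d) ^ 2 / Real.sqrt d} :=
  delta_coordinates_small_general C₀
end
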